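/- arXiv:2003.13134 — 3 statements merged into one kernel-verified Lean document; each statement's English description precedes it below -/
import Mathlib

section
/- Let (X,≤) be a metrizable suborderable Hausdorff space with compatible linear order ≤ and compatible convex metric ρ, having infinitely many connected components. (1) If U ⊆ X is a clopen set such that C ⊆ U ⊆ Δ(C,ε) for some connected component C of X and some ε > 0, then U ∈ D[X]. (2) Every U ∈ D[X] that meets infinitely many components of X admits a partition into two sets U₁, U₂ ∈ D[X]. -/
open Topology

section MetricSuborderable

variable {X : Type*} [MetricSpace X] [LinearOrder X]

/-- `(←, C)`: the points lying strictly below every point of `C`. -/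
def leftOf (C : Set X) : Set X := {x | ∀ c ∈ C, x < c}

/-- `(C, →)`: the points lying strictly above every point of `C`. -/
def rightOf (C : Set X) : Set X := {x | ∀ c ∈ C, c < x}

/-- `ℓ(C) = |cl((←, C)) ∩ C|`. -/
noncomputable def ell (C : Set X) : ℕ := (closure (leftOf C) ∩ C).ncard

/-- `r(C) = |C ∩ cl((C, →))|`. -/
noncomputable def rr (C : Set X) : ℕ := (C ∩ closure (rightOf C)).ncard

/-- The open `δ`-neighbourhood `O(C, δ)` of a set `C`. -/
def ballAround (C : Set X) (δ : ℝ) : Set X := {x | ∃ c ∈ C, dist x c < δ}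

/-- The neighbourhood `Δ(C, ε)` of a component `C`; note that
`(←, C] = (C, →)ᶜ` and `[C, →) = (←, C)ᶜ`. -/
noncomputable def Delta (C : Set X) (ε : ℝ) : Set X :=
  if ell C = 0 ∧ rr C = 0 then C
  else if ell C ≠ 0 ∧ rr C = 0 then ballAround C (ε / 2) ∩ (rightOf C)ᶜ
  else if ell C = 0 ∧ rr C ≠ 0 then ballAround C (ε / 2) ∩ (leftOf C)ᶜ
  else ballAround C (ε / 2)

/-- `D[X]`: the clopen sets that are a connected component or meet infinitely
many connected components. -/
def DD (X : Type*) [TopologicalSpace X] : Set (Set X) :=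
  {U | IsClopen U ∧ ((∃ x : X, U = connectedComponent x) ∨
    {C : Set X | ∃ x ∈ U, C = connectedComponent x}.Infinite)}

/-- `C_ε[U]`: the connected components of `U` of diameter at least `ε`. -/
noncomputable def compsGE (U : Set X) (ε : ℝ) : Set (Set X) :=
  {C | (∃ x ∈ U, C = connectedComponentIn U x) ∧
    ENNReal.ofReal ε ≤ EMetric.diam C}

/-- `D[X, ε]`: the members of `D[X]` of diameter `< ε`, or contained in
`Δ(C, ε)` for some component `C ∈ C_ε[U]`. -/
noncomputable def DXeps (X : Type*) [MetricSpace X] [LinearOrder X] (ε : ℝ) :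
    Set (Set X) :=
  {U | U ∈ DD X ∧ (EMetric.diam U < ENNReal.ofReal ε ∨
    ∃ C ∈ compsGE U ε, U ⊆ Delta C ε)}

/-- `κ[C]`: the least `n` with `diam C ≥ 2^(-n)`. -/
noncomputable def kappa (C : Set X) : ℕ :=
  sInf {n : ℕ | ENNReal.ofReal ((2 : ℝ) ^ (-(n : ℤ))) ≤ EMetric.diam C}

/-- `A < B` pointwise for subsets of a linear order. -/
def setBelow (A B : Set X) : Prop := ∀ a ∈ A, ∀ b ∈ B, a < b

end MetricSuborderable

/-!
(1) If `U` met only finitely many components, then the component `C ⊆ U` would be relatively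
open in `U`, so no point of `C` is adherent to `(←, C)` or `(C, →)`; hence `ℓ(C) = r(C) = 0`
and `Δ(C, ε)` misses both sides of `C`. Components are order-convex, so `U ⊆ C`.

(2) Split off an open component of `U` if there is one. Otherwise any splitting of `U` into
two nonempty clopen pieces works: a nonempty clopen set meeting only finitely many components
would have them all open.
-/

open Set

section Components

variable {X : Type*} [TopologicalSpace X]

lemma setOf_exists_eq_connectedComponent (U : Set X) :
    {C : Set X | ∃ x ∈ U, C = connectedComponent x} = connectedComponent '' U := by
  ext C
  simp only [mem_ofPred_eq, mem_image, eq_comm]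

/-- The trace of a component is `U` minus the finitely many other (closed) components. -/
lemma IsOpen.inter_connectedComponent_of_finite {U : Set X} (hU : IsOpen U)
    (hfin : (connectedComponent '' U).Finite) (x : X) :
    IsOpen (U ∩ connectedComponent x) := by
  have hclosed : IsClosed (⋃ D ∈ connectedComponent '' U \ {connectedComponent x}, D) :=
    hfin.sdiff.isClosed_biUnion fun D ⟨⟨_, _, hD⟩, _⟩ => hD ▸ isClosed_connectedComponent
  convert hU.sdiff hclosed using 1
  ext z
  simp only [mem_inter_iff, mem_sdiff, mem_iUnion, mem_image, mem_singleton_iff, exists_prop,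
    not_exists, not_and, and_congr_right_iff]
  intro hzU
  constructor
  · rintro hz _ ⟨⟨y, -, rfl⟩, hne⟩ hzy
    exact hne ((connectedComponent_eq hzy).trans (connectedComponent_eq hz).symm)
  · intro h
    by_contra hz
    exact h _ ⟨⟨z, hzU, rfl⟩, fun e => hz (connectedComponent_eq_iff_mem.1 e)⟩
      mem_connectedComponent

lemma Disjoint.closure_connectedComponent_of_finite {U R : Set X} {x : X}
    (hR : Disjoint R (connectedComponent x)) (hU : IsOpen U)
    (hfin : (connectedComponent '' U).Finite) (hxU : connectedComponent x ⊆ U) :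
    Disjoint (closure R) (connectedComponent x) :=
  ((hR.mono_right inter_subset_right).closure_left
    (hU.inter_connectedComponent_of_finite hfin x)).mono_right (subset_inter hxU subset_rfl)

lemma IsClopen.infinite_image_connectedComponent {W : Set X} (hW : IsClopen W)
    (hne : W.Nonempty) (hnop : ∀ x ∈ W, ¬IsOpen (connectedComponent x)) :
    (connectedComponent '' W).Infinite := by
  intro hfin
  obtain ⟨x, hx⟩ := hne
  have hopen := hW.isOpen.inter_connectedComponent_of_finite hfin x
  rw [inter_eq_right.2 (hW.connectedComponent_subset hx)] at hopen
  exact hnop x hx hopen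

lemma IsClopen.exists_isClopen_subset_of_nontrivial {U : Set X} (hU : IsClopen U)
    (h : (connectedComponent '' U).Nontrivial) :
    ∃ V ⊆ U, IsClopen V ∧ V.Nonempty ∧ (U \ V).Nonempty := by
  have hnpre : ¬IsPreconnected U := by
    intro hpre
    obtain ⟨_, ⟨a, ha, rfl⟩, _, ⟨b, hb, rfl⟩, hab⟩ := h
    exact hab (connectedComponent_eq (hpre.subset_connectedComponent ha hb))
  simp only [IsPreconnected, not_forall, not_nonempty_iff_eq_empty] at hnpre
  obtain ⟨u, v, hu, hv, hcover, hUu, hUv, huv⟩ := hnpre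
  have hUu_eq : U ∩ u = U \ v := by
    ext z
    constructor
    · rintro ⟨hzU, hzu⟩
      exact ⟨hzU, fun hzv => (huv.subset ⟨hzU, hzu, hzv⟩ : z ∈ (∅ : Set X))⟩
    · rintro ⟨hzU, hzv⟩
      exact ⟨hzU, (hcover hzU).resolve_right hzv⟩
  refine ⟨U ∩ u, inter_subset_left, ⟨hUu_eq ▸ hU.isClosed.sdiff hv, hU.isOpen.inter hu⟩,
    hUu, ?_⟩
  obtain ⟨z, hzU, hzv⟩ := hUv
  exact ⟨z, hzU, fun hz => (hUu_eq ▸ hz).2 hzv⟩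

lemma mem_DD_iff {U : Set X} :
    U ∈ DD X ↔ IsClopen U ∧
      ((∃ x, U = connectedComponent x) ∨ (connectedComponent '' U).Infinite) := by
  rw [DD, mem_ofPred_eq, setOf_exists_eq_connectedComponent]

theorem IsClopen.exists_mem_DD_sdiff_mem_DD {U : Set X} (hU : IsClopen U)
    (hinf : (connectedComponent '' U).Infinite) : ∃ V ⊆ U, V ∈ DD X ∧ U \ V ∈ DD X := by
  simp only [mem_DD_iff]
  by_cases hop : ∃ x ∈ U, IsOpen (connectedComponent x)
  · obtain ⟨x, hxU, hox⟩ := hop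
    refine ⟨_, hU.connectedComponent_subset hxU, ⟨⟨isClosed_connectedComponent, hox⟩,
      .inl ⟨x, rfl⟩⟩, hU.diff ⟨isClosed_connectedComponent, hox⟩, .inr ?_⟩
    refine (hinf.sdiff (finite_singleton (connectedComponent x))).mono ?_
    rintro _ ⟨⟨z, hzU, rfl⟩, hne⟩
    exact ⟨z, ⟨hzU, fun hz => hne (connectedComponent_eq hz).symm⟩, rfl⟩
  · push Not at hop
    obtain ⟨V, hVU, hV, hVne, hUVne⟩ := hU.exists_isClopen_subset_of_nontrivial hinf.nontrivial
    have hVinf := hV.infinite_image_connectedComponent hVne fun x hx => hop x (hVU hx)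
    have hUVinf := (hU.diff hV).infinite_image_connectedComponent hUVne fun x hx => hop x hx.1
    exact ⟨V, hVU, ⟨hV, .inr hVinf⟩, ⟨hU.diff hV, .inr hUVinf⟩⟩

end Components

section Order

variable {X : Type*} [LinearOrder X]

lemma IsPreconnected.ordConnected_of_isOpen_Iio_Ioi [TopologicalSpace X]
    (hIio : ∀ a : X, IsOpen (Iio a)) (hIoi : ∀ a : X, IsOpen (Ioi a)) {s : Set X}
    (hs : IsPreconnected s) : s.OrdConnected := by
  refine ⟨fun a ha b hb z hz => ?_⟩
  by_contra hzs
  obtain ⟨w, -, hwz, hzw⟩ := hs (Iio z) (Ioi z) (hIio z) (hIoi z)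
    (fun w hw => lt_or_gt_of_ne (ne_of_mem_of_not_mem hw hzs))
    ⟨a, ha, hz.1.lt_of_ne (ne_of_mem_of_not_mem ha hzs)⟩
    ⟨b, hb, hz.2.lt_of_ne' (ne_of_mem_of_not_mem hb hzs)⟩
  exact (hwz.trans hzw).false

lemma disjoint_leftOf_self (C : Set X) : Disjoint (leftOf C) C :=
  disjoint_left.2 fun x hx hxC => (hx x hxC).false

lemma disjoint_rightOf_self (C : Set X) : Disjoint (rightOf C) C :=
  disjoint_left.2 fun x hx hxC => (hx x hxC).false

lemma Set.OrdConnected.mem_leftOf_or_mem_rightOf {C : Set X} (hC : C.OrdConnected) {x : X}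
    (hx : x ∉ C) : x ∈ leftOf C ∨ x ∈ rightOf C := by
  by_contra! h
  simp only [leftOf, rightOf, mem_ofPred_eq, not_forall, not_lt, exists_prop] at h
  obtain ⟨⟨a, ha, hax⟩, ⟨b, hb, hxb⟩⟩ := h
  exact hx (hC.out ha hb ⟨hax, hxb⟩)

end Order

section Metric

variable {X : Type*} [MetricSpace X] [LinearOrder X]

lemma disjoint_Delta_leftOf {C : Set X} (h : ell C = 0) (ε : ℝ) :
    Disjoint (Delta C ε) (leftOf C) := by
  unfold Delta
  split_ifs
  · exact (disjoint_leftOf_self C).symm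
  · omega
  · exact disjoint_compl_left.mono_left inter_subset_right
  · omega

lemma disjoint_Delta_rightOf {C : Set X} (h : rr C = 0) (ε : ℝ) :
    Disjoint (Delta C ε) (rightOf C) := by
  unfold Delta
  split_ifs
  · exact (disjoint_rightOf_self C).symm
  · exact disjoint_compl_left.mono_left inter_subset_right
  · omega
  · omega

lemma ell_connectedComponent_eq_zero {U : Set X} (hU : IsOpen U)
    (hfin : (connectedComponent '' U).Finite) {x : X} (hxU : connectedComponent x ⊆ U) :
    ell (connectedComponent x) = 0 := by
  rw [ell, ((disjoint_leftOf_self _).closure_connectedComponent_of_finite hU hfin hxU).inter_eq,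
    ncard_empty]

lemma rr_connectedComponent_eq_zero {U : Set X} (hU : IsOpen U)
    (hfin : (connectedComponent '' U).Finite) {x : X} (hxU : connectedComponent x ⊆ U) :
    rr (connectedComponent x) = 0 := by
  rw [rr, ((disjoint_rightOf_self _).closure_connectedComponent_of_finite hU hfin
    hxU).symm.inter_eq, ncard_empty]

theorem IsClopen.mem_DD_of_subset_Delta (hIio : ∀ a : X, IsOpen (Iio a))
    (hIoi : ∀ a : X, IsOpen (Ioi a)) {U : Set X} (hU : IsClopen U) {x₀ : X} {ε : ℝ}
    (hCU : connectedComponent x₀ ⊆ U) (hUΔ : U ⊆ Delta (connectedComponent x₀) ε) :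
    U ∈ DD X := by
  rw [mem_DD_iff]
  refine ⟨hU, (connectedComponent '' U).finite_or_infinite.imp (fun hfin => ⟨x₀, ?_⟩) id⟩
  refine subset_antisymm (fun x hxU => ?_) hCU
  by_contra hx
  have hord :=
    (isPreconnected_connectedComponent (x := x₀)).ordConnected_of_isOpen_Iio_Ioi hIio hIoi
  rcases hord.mem_leftOf_or_mem_rightOf hx with hl | hr
  · exact (disjoint_Delta_leftOf (ell_connectedComponent_eq_zero hU.isOpen hfin hCU) ε).ne_of_mem
      (hUΔ hxU) hl rfl
  · exact (disjoint_Delta_rightOf (rr_connectedComponent_eq_zero hU.isOpen hfin hCU) ε).ne_of_mem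
      (hUΔ hxU) hr rfl

end Metric

theorem stmt13_general {X : Type*} [MetricSpace X] [LinearOrder X]
    (hIio : ∀ a : X, IsOpen (Set.Iio a)) (hIoi : ∀ a : X, IsOpen (Set.Ioi a)) :
    (∀ (U : Set X), IsClopen U → ∀ (x₀ : X) (ε : ℝ), 0 < ε →
      connectedComponent x₀ ⊆ U → U ⊆ Delta (connectedComponent x₀) ε →
        U ∈ DD X) ∧
    (∀ U ∈ DD X, {C : Set X | ∃ x ∈ U, C = connectedComponent x}.Infinite →
      ∃ U₁ U₂ : Set X, U₁ ∈ DD X ∧ U₂ ∈ DD X ∧ U₁ ∩ U₂ = ∅ ∧ U₁ ∪ U₂ = U) := by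
  refine ⟨fun U hU x₀ ε _ hCU hUΔ => hU.mem_DD_of_subset_Delta hIio hIoi hCU hUΔ, ?_⟩
  intro U hUD hinf
  rw [setOf_exists_eq_connectedComponent] at hinf
  obtain ⟨V, hVU, hV, hUV⟩ := (mem_DD_iff.1 hUD).1.exists_mem_DD_sdiff_mem_DD hinf
  exact ⟨V, U \ V, hV, hUV, inter_sdiff_self V U, union_sdiff_cancel hVU⟩

/-- Proposition 4.3: in a metrizable suborderable space `(X, ≤)` with
compatible convex metric and infinitely many connected components:
(1) every clopen `U` with `C ⊆ U ⊆ Δ(C, ε)` for a component `C` and `ε > 0`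
belongs to `D[X]`; (2) every `U ∈ D[X]` meeting infinitely many components can
be partitioned into two members of `D[X]`. -/
theorem stmt13 {X : Type*} [MetricSpace X] [LinearOrder X]
    (hconv : ∀ x a b y : X, x ≤ a → a ≤ b → b ≤ y → dist a b ≤ dist x y)
    (hIio : ∀ a : X, IsOpen (Set.Iio a)) (hIoi : ∀ a : X, IsOpen (Set.Ioi a))
    (hbase : ∀ (x : X) (U : Set X), IsOpen U → x ∈ U →
      ∃ V : Set X, IsOpen V ∧ x ∈ V ∧ V ⊆ U ∧ V.OrdConnected)
    (hinf : (Set.range fun x : X => connectedComponent x).Infinite) :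
    (∀ (U : Set X), IsClopen U → ∀ (x₀ : X) (ε : ℝ), 0 < ε →
      connectedComponent x₀ ⊆ U → U ⊆ Delta (connectedComponent x₀) ε →
        U ∈ DD X) ∧
    (∀ U ∈ DD X, {C : Set X | ∃ x ∈ U, C = connectedComponent x}.Infinite →
      ∃ U₁ U₂ : Set X, U₁ ∈ DD X ∧ U₂ ∈ DD X ∧ U₁ ∩ U₂ = ∅ ∧ U₁ ∪ U₂ = U) :=
  stmt13_general hIio hIoi
end

section
/- Let S : T → (nonempty subsets of X) be a discrete sieve on a Hausdorff space X and let g be an S-invariant weak selection for X. Then g is continuous at each pair {x,y} ∈ F₂(X) with β[x] ≠ β[y]: that is, whenever x <_g y and β[x] ≠ β[y], there exist open sets U ∋ x and V ∋ y with s <_g t for every s ∈ U, t ∈ V. -/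
open Topology

/-- A weak selection for `X`: a choice function on (unordered) pairs,
encoded as a symmetric map `X → X → X` picking one of its two arguments. -/
structure WeakSelection (X : Type*) where
  toFun : X → X → X
  mem_pair : ∀ x y, toFun x y = x ∨ toFun x y = y
  comm : ∀ x y, toFun x y = toFun y x

namespace WeakSelection

variable {X : Type*}

/-- `x ≤_σ y` iff `σ {x, y} = x`. -/
def le (σ : WeakSelection X) (x y : X) : Prop := σ.toFun x y = x

/-- `x <_σ y` iff `x ≤_σ y` and `x ≠ y`. -/
def lt (σ : WeakSelection X) (x y : X) : Prop := σ.le x y ∧ x ≠ y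

/-- The selection topology `T_σ`, generated by the `≤_σ`-open intervals. -/
def selTop (σ : WeakSelection X) : TopologicalSpace X :=
  TopologicalSpace.generateFrom
    {s : Set X | ∃ a : X, s = {y | σ.lt y a} ∨ s = {y | σ.lt a y}}

/-- Continuity of a weak selection on a topological space. -/
def Continuous [TopologicalSpace X] (σ : WeakSelection X) : Prop :=
  ∀ x y : X, σ.lt x y → ∃ U V : Set X, IsOpen U ∧ IsOpen V ∧ x ∈ U ∧ y ∈ V ∧
    ∀ s ∈ U, ∀ t ∈ V, σ.lt s t

end WeakSelection

/-- `A <_g B` for subsets: `a <_g b` for all `a ∈ A`, `b ∈ B`. -/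
def setLT {X : Type*} (g : WeakSelection X) (A B : Set X) : Prop :=
  ∀ a ∈ A, ∀ b ∈ B, g.lt a b

/-- `g` is the `P`-invariant weak selection `σ * h` determined by a weak
selection `σ` for the partition `P` (with block map `blk`) and weak selections
`h p` for each block `p ∈ P`: on points of distinct blocks `g` is governed by
`σ`, and within a block `p` it agrees with `h p`. -/
def IsStar {X : Type*} (P : Set (Set X)) (blk : X → Set X) (hblk : ∀ x, blk x ∈ P)
    (σ : WeakSelection ↥P) (h : ∀ p : ↥P, WeakSelection ↥(p : Set X))
    (g : WeakSelection X) : Prop :=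
  (∀ x y : X, blk x ≠ blk y →
      (g.lt x y ↔ σ.lt ⟨blk x, hblk x⟩ ⟨blk y, hblk y⟩)) ∧
  (∀ (p : ↥P) (x y : ↥(p : Set X)), blk ↑x = ↑p → blk ↑y = ↑p →
      g.toFun ↑x ↑y = ↑((h p).toFun x y))

section Tree

variable {T : Type*} (tle : T → T → Prop)

/-- The strict relation associated to `tle`. -/
def tlt (a b : T) : Prop := tle a b ∧ a ≠ b

/-- The union of the first `n` levels of the tree `(T, tle)`. -/
def treeBelow : ℕ → Set T
  | 0 => ∅
  | n + 1 => treeBelow n ∪ {t | t ∉ treeBelow n ∧ ∀ s, tlt tle s t → s ∈ treeBelow n}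

/-- The `n`-th level `T(n)`: the minimal elements of the complement of the
union of the previous levels. -/
def treeLevel (n : ℕ) : Set T :=
  {t | t ∉ treeBelow tle n ∧ ∀ s, tlt tle s t → s ∈ treeBelow tle n}

/-- `node t`: the immediate successors of `t`. -/
def node (t : T) : Set T :=
  {s | tlt tle t s ∧ ¬∃ u, tlt tle t u ∧ tlt tle u s}

/-- `(T, tle)` is an `ω`-levelled tree: a partial order in which the set of
predecessors of each point is a finite chain and every point lies on some
(finite) level. -/
def IsOmegaTree : Prop :=
  (∀ a, tle a a) ∧ (∀ a b, tle a b → tle b a → a = b) ∧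
  (∀ a b c, tle a b → tle b c → tle a c) ∧
  (∀ t, {s | tle s t}.Finite) ∧ (∀ t, IsChain tle {s | tle s t}) ∧
  (∀ t, ∃ n : ℕ, t ∈ treeLevel tle n)

/-- The tree is pruned: every node has an immediate successor. -/
def Pruned : Prop := ∀ t : T, (node tle t).Nonempty

/-- The tree is anti-binary: neither the bottom level nor any node has exactly
two elements. -/
def AntiBinary : Prop :=
  (treeLevel tle 0).encard ≠ 2 ∧ ∀ t : T, (node tle t).encard ≠ 2

/-- A sieve on `X` indexed by the tree `(T, tle)`. -/
def IsSieve {X : Type*} (S : T → Set X) : Prop :=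
  (∀ t, (S t).Nonempty) ∧ (⋃ t ∈ treeLevel tle 0, S t) = Set.univ ∧
  ∀ t, S t = ⋃ s ∈ node tle t, S s

/-- A discrete sieve: each level yields a discrete cover of `X`. -/
def IsDiscreteSieve {X : Type*} [TopologicalSpace X] (S : T → Set X) : Prop :=
  IsSieve tle S ∧ ∀ n : ℕ,
    (⋃ t ∈ treeLevel tle n, S t) = Set.univ ∧
    ∀ x : X, ∃ N ∈ nhds x,
      {t | t ∈ treeLevel tle n ∧ (S t ∩ N).Nonempty}.Subsingleton

end Tree

/-
Two points with different branches lie in different members `S tx`, `S ty` of one level of the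
sieve. By decisiveness and `x <_g y`, the whole of `S tx` lies `g`-below the whole of `S ty`, and
since each level is a discrete cover, its members are open, so `U = S tx`, `V = S ty` will do.
-/

namespace WeakSelection

variable {X : Type*}

theorem lt_asymm {g : WeakSelection X} {x y : X} (h : g.lt x y) : ¬g.lt y x :=
  fun h' => h.2 (h.1.symm.trans ((g.comm x y).trans h'.1))

end WeakSelection

theorem setLT_of_decisive {X : Type*} {g : WeakSelection X} {A B : Set X}
    (hdec : setLT g A B ∨ setLT g B A) {x y : X} (hx : x ∈ A) (hy : y ∈ B) (hxy : g.lt x y) :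
    setLT g A B :=
  hdec.resolve_right fun hBA => WeakSelection.lt_asymm hxy (hBA y hy x hx)

theorem isOpen_of_discrete_cover {ι X : Type*} [TopologicalSpace X] {F : ι → Set X}
    {I : Set ι} (hcov : (⋃ i ∈ I, F i) = Set.univ)
    (hdisc : ∀ x, ∃ N ∈ 𝓝 x, {i | i ∈ I ∧ (F i ∩ N).Nonempty}.Subsingleton)
    {i : ι} (hi : i ∈ I) : IsOpen (F i) := by
  refine isOpen_iff_mem_nhds.2 fun x hx => ?_
  obtain ⟨N, hN, hsub⟩ := hdisc x
  refine Filter.mem_of_superset hN fun z hz => ?_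
  obtain ⟨j, hj, hzj⟩ : ∃ j ∈ I, z ∈ F j := by simpa using Set.eq_univ_iff_forall.mp hcov z
  have hji : j = i := hsub ⟨hj, z, hzj, hz⟩ ⟨hi, x, hx, mem_of_mem_nhds hN⟩
  exact hji ▸ hzj

section Tree

variable {T X : Type*} {tle : T → T → Prop} {S : T → Set X}

theorem exists_mem_treeLevel (hcov : ∀ n, (⋃ t ∈ treeLevel tle n, S t) = Set.univ) (n : ℕ)
    (x : X) : ∃ t ∈ treeLevel tle n, x ∈ S t := by
  simpa using Set.eq_univ_iff_forall.mp (hcov n) x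

theorem exists_treeLevel_separating (hlevel : ∀ t, ∃ n, t ∈ treeLevel tle n)
    (hcov : ∀ n, (⋃ t ∈ treeLevel tle n, S t) = Set.univ) {x y : X}
    (hbranch : {t | x ∈ S t} ≠ {t | y ∈ S t}) :
    ∃ n, ∃ tx ∈ treeLevel tle n, ∃ ty ∈ treeLevel tle n, x ∈ S tx ∧ y ∈ S ty ∧ S tx ≠ S ty := by
  obtain ⟨t, ht⟩ : ∃ t, ¬(x ∈ S t ↔ y ∈ S t) := by
    by_contra! h
    exact hbranch (Set.ext h)
  obtain ⟨n, hn⟩ := hlevel t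
  by_cases hxt : x ∈ S t
  · have hyt : y ∉ S t := fun hyt => ht (iff_of_true hxt hyt)
    obtain ⟨ty, hty, hyty⟩ := exists_mem_treeLevel hcov n y
    exact ⟨n, t, hn, ty, hty, hxt, hyty, fun h => hyt (h ▸ hyty)⟩
  · have hyt : y ∈ S t := by_contra fun hyt => ht (iff_of_false hxt hyt)
    obtain ⟨tx, htx, hxtx⟩ := exists_mem_treeLevel hcov n x
    exact ⟨n, tx, htx, t, hn, hxtx, hyt, fun h => hxt (h ▸ hxtx)⟩

end Tree

theorem stmt18_general {X : Type*} {T : Type*} [TopologicalSpace X]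
    (tle : T → T → Prop) (htree : IsOmegaTree tle)
    (S : T → Set X) (hS : IsDiscreteSieve tle S)
    (g : WeakSelection X)
    (hinv : ∀ n : ℕ, ∀ t ∈ treeLevel tle n, ∀ t' ∈ treeLevel tle n,
      S t ≠ S t' → setLT g (S t) (S t') ∨ setLT g (S t') (S t))
    (x y : X) (hxy : g.lt x y)
    (hbranch : {t | x ∈ S t} ≠ {t | y ∈ S t}) :
    ∃ U V : Set X, IsOpen U ∧ IsOpen V ∧ x ∈ U ∧ y ∈ V ∧
      ∀ s ∈ U, ∀ t ∈ V, g.lt s t := by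
  obtain ⟨n, tx, htx, ty, hty, hx, hy, hne⟩ :=
    exists_treeLevel_separating htree.2.2.2.2.2 (fun n => (hS.2 n).1) hbranch
  have hlt : setLT g (S tx) (S ty) := setLT_of_decisive (hinv n tx htx ty hty hne) hx hy hxy
  have hopen : ∀ {t}, t ∈ treeLevel tle n → IsOpen (S t) :=
    isOpen_of_discrete_cover (hS.2 n).1 (hS.2 n).2
  exact ⟨S tx, S ty, hopen htx, hopen hty, hx, hy, hlt⟩

/-- Proposition 5.2: if `S` is a discrete sieve on a Hausdorff space `X` and
`g` is an `S`-invariant weak selection (each level of the sieve is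
`g`-decisive), then `g` is continuous at every pair `{x, y}` whose associated
branches `β[x] = {t | x ∈ S t}` and `β[y]` differ. -/
theorem stmt18 {X : Type*} {T : Type*} [TopologicalSpace X] [T2Space X]
    (tle : T → T → Prop) (htree : IsOmegaTree tle)
    (S : T → Set X) (hS : IsDiscreteSieve tle S)
    (g : WeakSelection X)
    (hinv : ∀ n : ℕ, ∀ t ∈ treeLevel tle n, ∀ t' ∈ treeLevel tle n,
      S t ≠ S t' → setLT g (S t) (S t') ∨ setLT g (S t') (S t))
    (x y : X) (hxy : g.lt x y)
    (hbranch : {t | x ∈ S t} ≠ {t | y ∈ S t}) :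
    ∃ U V : Set X, IsOpen U ∧ IsOpen V ∧ x ∈ U ∧ y ∈ V ∧
      ∀ s ∈ U, ∀ t ∈ V, g.lt s t :=
  stmt18_general tle htree S hS g hinv x y hxy hbranch
end

section
/- Let (X,≤) be a suborderable metrizable Hausdorff space with infinitely many connected components, with compatible linear order ≤ and compatible convex metric ρ, and let S : T → D[X] be a discrete sieve on X indexed by a pruned ω-levelled tree T such that: each family {S(t) : t ∈ T(n)}, n < ω, is a partition of X; S maps T(n) into D[X,2^{-n}] for each n < ω; and for every non-degenerate component C of X with branch β satisfying C ⊆ ⋂_{t∈β} S(t), every n ≥ κ[C], t ∈ β ∩ T(n), p ∈ β ∩ node(t), and s ∈ node(t) with s ≠ p, one has diam(S(s)) ≤ 2^{-n+1}. Then for every clopen set U ⊆ X and every x ∈ U there exists t ∈ β[x] with S(t) ⊆ U, where β[x] = {t ∈ T : x ∈ S(t)} is the branch determined by x. -/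
open Topology

/-!
Suppose no `S t` along the branch `f` of `x` lies in `U`. From some level `N` on, `S (f m)` is too
wide to fit in a small ball around `x`, so `D[X, 2^-m]` places it inside `Δ(C_m, 2^-m)` for a
component `C_m` of diameter `≥ 2^-m`. By the sibling diameter bound the branch of `C_m` must pass
through `S (f (m+1))`, so `C_m ⊆ Δ(C_{m+1}, 2^-(m+1))`; a component disjoint from `C_{m+1}` lies
on one side of it and would have diameter `≤ 2^-(m+1)`, hence `C_m = C_{m+1}`. Thus the `C_m`
stabilise at some `C`, and `x ∈ Δ(C, 2^-m)` for all large `m` forces `x ∈ closure C = C`. But `U`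
is a neighbourhood of `C_x` and of its at most two limit ends, so `Δ(C_x, 2^-N) ⊆ U`.
-/

open Filter Metric

section Tree

variable {T : Type*} {tle : T → T → Prop}

theorem treeBelow_mono : Monotone (treeBelow tle) :=
  monotone_nat_of_le_succ fun _ => Set.subset_union_left

theorem treeLevel_subset_treeBelow_succ (n : ℕ) : treeLevel tle n ⊆ treeBelow tle (n + 1) :=
  Set.subset_union_right

theorem mem_treeBelow_of_tlt {k : ℕ} {s u : T} (hs : s ∈ treeBelow tle (k + 1))
    (hu : tlt tle u s) : u ∈ treeBelow tle k := by
  induction k with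
  | zero => exact hs.resolve_left (Set.notMem_empty s) |>.2 u hu
  | succ k ih =>
    rcases hs with hs | hs
    · exact treeBelow_mono k.le_succ (ih hs)
    · exact hs.2 u hu

theorem eq_of_tle_of_mem_treeLevel {n : ℕ} {t t' : T} (ht : t ∈ treeLevel tle n)
    (ht' : t' ∈ treeLevel tle n) (h : tle t t') : t = t' := by
  by_contra hne
  exact ht.1 (ht'.2 t ⟨h, hne⟩)

theorem mem_treeLevel_succ_of_mem_node (hchain : ∀ t, IsChain tle {s | tle s t}) {n : ℕ}
    {t s : T} (ht : t ∈ treeLevel tle n) (hs : s ∈ node tle t) : s ∈ treeLevel tle (n + 1) := by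
  refine ⟨fun hmem => ht.1 (mem_treeBelow_of_tlt hmem hs.1), fun u hu => ?_⟩
  by_cases hut : u = t
  · exact hut ▸ treeLevel_subset_treeBelow_succ n ht
  rcases hchain s hu.1 hs.1.1 hut with h | h
  · exact Or.inl (ht.2 u ⟨h, hut⟩)
  · exact absurd ⟨u, ⟨h, Ne.symm hut⟩, hu⟩ hs.2

end Tree

section Sieve

variable {T X : Type*} {tle : T → T → Prop} {S : T → Set X}

def LevelsDisjoint (tle : T → T → Prop) (S : T → Set X) : Prop :=
  ∀ n : ℕ, ∀ t ∈ treeLevel tle n, ∀ t' ∈ treeLevel tle n, t ≠ t' → S t ∩ S t' = ∅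

theorem LevelsDisjoint.eq_of_mem (hpart : LevelsDisjoint tle S) {n : ℕ} {t t' : T} {w : X}
    (ht : t ∈ treeLevel tle n) (ht' : t' ∈ treeLevel tle n) (hw : w ∈ S t) (hw' : w ∈ S t') :
    t = t' := by
  by_contra hne
  exact (hpart n t ht t' ht' hne).subset ⟨hw, hw'⟩

theorem IsSieve.exists_mem_node (hS : IsSieve tle S) {w : X} {t : T} (hw : w ∈ S t) :
    ∃ s ∈ node tle t, w ∈ S s := by
  rw [hS.2.2 t] at hw
  simpa using hw

theorem IsSieve.exists_branch (hS : IsSieve tle S) (hchain : ∀ t, IsChain tle {s | tle s t})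
    (w : X) : ∃ g : ℕ → T,
      (∀ n, g n ∈ treeLevel tle n ∧ w ∈ S (g n)) ∧ ∀ n, g (n + 1) ∈ node tle (g n) := by
  obtain ⟨u, hu, hwu⟩ : ∃ u ∈ treeLevel tle 0, w ∈ S u := by
    simpa using hS.2.1.symm.subset (Set.mem_univ w)
  have hnext (t : {t // w ∈ S t}) : ∃ s : {t // w ∈ S t}, s.1 ∈ node tle t.1 :=
    let ⟨s, hs, hws⟩ := hS.exists_mem_node t.2
    ⟨⟨s, hws⟩, hs⟩
  choose next hnext using hnext
  let g : ℕ → {t // w ∈ S t} := fun n => Nat.rec ⟨u, hwu⟩ (fun _ => next) n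
  have hlevel (n : ℕ) : (g n).1 ∈ treeLevel tle n := by
    induction n with
    | zero => exact hu
    | succ n ih => exact mem_treeLevel_succ_of_mem_node hchain ih (hnext (g n))
  exact ⟨fun n => (g n).1, fun n => ⟨hlevel n, (g n).2⟩, fun n => hnext (g n)⟩

theorem isMaxChain_setOf_mem (htree : IsOmegaTree tle) (hpart : LevelsDisjoint tle S)
    {w : X} {g : ℕ → T} (hg : ∀ n, g n ∈ treeLevel tle n ∧ w ∈ S (g n))
    (hgnode : ∀ n, g (n + 1) ∈ node tle (g n)) : IsMaxChain tle {t | w ∈ S t} := by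
  obtain ⟨hrefl, -, htrans, -, -, hlevels⟩ := htree
  have hmono : ∀ {m n}, m ≤ n → tle (g m) (g n) := by
    intro m n h
    induction h with
    | refl => exact hrefl _
    | step _ ih => exact htrans _ _ _ ih (hgnode _).1.1
  have hg_eq {t : T} {n : ℕ} (ht : t ∈ treeLevel tle n) (hw : w ∈ S t) : t = g n :=
    hpart.eq_of_mem ht (hg n).1 hw (hg n).2
  refine ⟨fun a ha b hb _ => ?_, fun γ hγ hsub => hsub.antisymm fun u hu => ?_⟩
  · obtain ⟨n, hn⟩ := hlevels a
    obtain ⟨m, hm⟩ := hlevels b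
    rw [hg_eq hn ha, hg_eq hm hb]
    exact (le_total n m).imp hmono hmono
  · obtain ⟨m, hm⟩ := hlevels u
    have hgm : g m ∈ γ := hsub (hg m).2
    obtain rfl : u = g m := by
      by_cases he : u = g m
      · exact he
      rcases hγ hu hgm he with h | h
      · exact eq_of_tle_of_mem_treeLevel hm (hg m).1 h
      · exact (eq_of_tle_of_mem_treeLevel (hg m).1 hm h).symm
    exact (hg m).2

end Sieve

theorem ediam_le_of_forall_dist_lt {X : Type*} [PseudoMetricSpace X] {D : Set X} {a : X} {r : ℝ}
    (h : ∀ y ∈ D, dist y a < r) : ediam D ≤ ENNReal.ofReal (2 * r) :=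
  ediam_le fun y hy z hz => by
    rw [edist_dist]
    exact ENNReal.ofReal_le_ofReal (by linarith [dist_triangle_right y z a, h y hy, h z hz])

theorem tendsto_two_zpow_sub_natCast (k : ℤ) :
    Tendsto (fun m : ℕ => (2 : ℝ) ^ (k - m)) atTop (𝓝 0) := by
  simp_rw [zpow_sub₀ (two_ne_zero (α := ℝ)), zpow_natCast]
  exact tendsto_const_nhds.div_atTop (tendsto_pow_atTop_atTop_of_one_lt one_lt_two)

theorem eventually_subset_of_ediam_le {X : Type*} [PseudoMetricSpace X] {U : Set X} {x : X}
    (hU : IsOpen U) (hx : x ∈ U) {r : ℕ → ℝ} (hr : Tendsto r atTop (𝓝 0)) :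
    ∀ᶠ m in atTop, ∀ A : Set X, x ∈ A → ediam A ≤ ENNReal.ofReal (r m) → A ⊆ U := by
  obtain ⟨ρ, hρ, hρU⟩ := Metric.isOpen_iff.1 hU x hx
  filter_upwards [hr.eventually (gt_mem_nhds hρ)] with m hm A hxA hA y hy
  refine hρU (mem_ball'.2 (edist_lt_ofReal.1 ?_))
  exact (edist_le_ediam_of_mem hxA hy).trans_lt
    (hA.trans_lt ((ENNReal.ofReal_lt_ofReal_iff hρ).2 hm))

section LinearOrder

variable {X : Type*} [LinearOrder X] {C D : Set X}

theorem Set.OrdConnected.mem_or_mem_leftOf_or_mem_rightOf (hC : C.OrdConnected) (y : X) :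
    y ∈ C ∨ y ∈ leftOf C ∨ y ∈ rightOf C := by
  by_contra! h
  obtain ⟨hyC, hL, hR⟩ := h
  simp only [leftOf, rightOf, Set.mem_ofPred_eq, not_forall, not_lt] at hL hR
  obtain ⟨c, hc, hcy⟩ := hL
  obtain ⟨c', hc', hyc'⟩ := hR
  exact hyC (hC.out hc hc' ⟨hcy, hyc'⟩)

theorem Set.OrdConnected.subset_leftOf_or_subset_rightOf (hC : C.OrdConnected)
    (hD : D.OrdConnected) (hCne : C.Nonempty) (hDC : Disjoint D C) :
    D ⊆ leftOf C ∨ D ⊆ rightOf C := by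
  have hside (y : X) (hy : y ∈ D) : y ∈ leftOf C ∨ y ∈ rightOf C :=
    (hC.mem_or_mem_leftOf_or_mem_rightOf y).resolve_left (hDC.notMem_of_mem_left hy)
  by_contra! h
  obtain ⟨⟨y, hyD, hyL⟩, ⟨z, hzD, hzR⟩⟩ := And.imp Set.not_subset.1 Set.not_subset.1 h
  obtain ⟨c, hc⟩ := hCne
  have hcD : c ∈ D := hD.out hzD hyD
    ⟨((hside z hzD).resolve_right hzR c hc).le, ((hside y hyD).resolve_left hyL c hc).le⟩
  exact hDC.notMem_of_mem_left hcD hc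

end LinearOrder

section OrderTopology

variable {X : Type*} [TopologicalSpace X] [LinearOrder X] {C : Set X}

theorem IsPreconnected.ordConnected_of_isOpen_rays (hIio : ∀ a : X, IsOpen (Set.Iio a))
    (hIoi : ∀ a : X, IsOpen (Set.Ioi a)) (hC : IsPreconnected C) : C.OrdConnected := by
  refine ⟨fun a ha b hb y ⟨hay, hyb⟩ => ?_⟩
  by_contra hy
  obtain ⟨z, -, hz, hz'⟩ := hC _ _ (hIio y) (hIoi y)
    (fun z hz => (lt_or_gt_of_ne fun h => hy (h ▸ hz)))
    ⟨a, ha, hay.lt_of_ne fun h => hy (h ▸ ha)⟩ ⟨b, hb, hyb.lt_of_ne' fun h => hy (h ▸ hb)⟩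
  exact lt_asymm hz hz'

theorem ordConnected_connectedComponent (hIio : ∀ a : X, IsOpen (Set.Iio a))
    (hIoi : ∀ a : X, IsOpen (Set.Ioi a)) (x : X) : (connectedComponent x).OrdConnected :=
  isPreconnected_connectedComponent.ordConnected_of_isOpen_rays hIio hIoi

theorem le_of_mem_closure_leftOf (hIoi : ∀ a : X, IsOpen (Set.Ioi a)) {a c : X}
    (ha : a ∈ closure (leftOf C)) (hc : c ∈ C) : a ≤ c :=
  closure_minimal (show leftOf C ⊆ Set.Iic c from fun _ hy => (hy c hc).le)
    (isOpen_compl_iff.mp (by rw [Set.compl_Iic]; exact hIoi c)) ha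

theorem le_of_mem_closure_rightOf (hIio : ∀ a : X, IsOpen (Set.Iio a)) {b c : X}
    (hb : b ∈ closure (rightOf C)) (hc : c ∈ C) : c ≤ b :=
  closure_minimal (show rightOf C ⊆ Set.Ici c from fun _ hy => (hy c hc).le)
    (isOpen_compl_iff.mp (by rw [Set.compl_Ici]; exact hIio c)) hb

theorem subsingleton_closure_leftOf_inter (hIoi : ∀ a : X, IsOpen (Set.Ioi a)) :
    (closure (leftOf C) ∩ C).Subsingleton := fun _ ha _ hb =>
  le_antisymm (le_of_mem_closure_leftOf hIoi ha.1 hb.2) (le_of_mem_closure_leftOf hIoi hb.1 ha.2)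

theorem subsingleton_inter_closure_rightOf (hIio : ∀ a : X, IsOpen (Set.Iio a)) :
    (C ∩ closure (rightOf C)).Subsingleton := fun _ ha _ hb =>
  le_antisymm (le_of_mem_closure_rightOf hIio hb.2 ha.1) (le_of_mem_closure_rightOf hIio ha.2 hb.1)

/-- The (at most two) points counted by `ell C` and `rr C`. -/
def limitEnds (C : Set X) : Set X :=
  closure (leftOf C) ∩ C ∪ C ∩ closure (rightOf C)

theorem limitEnds_subset (C : Set X) : limitEnds C ⊆ C := by
  rintro y (h | h)
  exacts [h.2, h.1]

theorem finite_limitEnds (hIio : ∀ a : X, IsOpen (Set.Iio a))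
    (hIoi : ∀ a : X, IsOpen (Set.Ioi a)) (C : Set X) : (limitEnds C).Finite :=
  (subsingleton_closure_leftOf_inter hIoi).finite.union
    (subsingleton_inter_closure_rightOf hIio).finite

end OrderTopology

def IsConvexMetric (X : Type*) [MetricSpace X] [LinearOrder X] : Prop :=
  ∀ x a b y : X, x ≤ a → a ≤ b → b ≤ y → dist a b ≤ dist x y

section Delta

variable {X : Type*} [MetricSpace X] [LinearOrder X] {C D : Set X} {ε : ℝ}

theorem exists_dist_lt_of_mem_Delta_of_mem_leftOf
    (hconv : IsConvexMetric X) (hIoi : ∀ a : X, IsOpen (Set.Ioi a)) {y : X} (hy : y ∈ Delta C ε)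
    (hyL : y ∈ leftOf C) :
    ∃ a ∈ closure (leftOf C) ∩ C, dist y a < ε / 2 := by
  suffices h : ell C ≠ 0 ∧ y ∈ ballAround C (ε / 2) by
    obtain ⟨a, ha⟩ := Set.nonempty_of_ncard_ne_zero h.1
    obtain ⟨c, hc, hyc⟩ := h.2
    exact ⟨a, ha, (hconv y y a c le_rfl (hyL a ha.2).le
      (le_of_mem_closure_leftOf hIoi ha.1 hc)).trans_lt hyc⟩
  unfold Delta at hy
  split_ifs at hy with h₁ h₂ h₃
  · exact absurd (hyL y hy) (lt_irrefl y)
  · exact ⟨h₂.1, hy.1⟩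
  · exact absurd hyL hy.2
  · exact ⟨by tauto, hy⟩

theorem exists_dist_lt_of_mem_Delta_of_mem_rightOf
    (hconv : IsConvexMetric X) (hIio : ∀ a : X, IsOpen (Set.Iio a)) {y : X} (hy : y ∈ Delta C ε)
    (hyR : y ∈ rightOf C) :
    ∃ b ∈ C ∩ closure (rightOf C), dist y b < ε / 2 := by
  suffices h : rr C ≠ 0 ∧ y ∈ ballAround C (ε / 2) by
    obtain ⟨b, hb⟩ := Set.nonempty_of_ncard_ne_zero h.1
    obtain ⟨c, hc, hyc⟩ := h.2
    refine ⟨b, hb, lt_of_le_of_lt ?_ hyc⟩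
    rw [dist_comm y b, dist_comm y c]
    exact hconv c b y y (le_of_mem_closure_rightOf hIio hb.2 hc) (hyR b hb.1).le le_rfl
  unfold Delta at hy
  split_ifs at hy with h₁ h₂ h₃
  · exact absurd (hyR y hy) (lt_irrefl y)
  · exact absurd hyR hy.2
  · exact ⟨h₃.2, hy.1⟩
  · exact ⟨by tauto, hy⟩

theorem Delta_subset_union_thickening
    (hconv : IsConvexMetric X) (hIio : ∀ a : X, IsOpen (Set.Iio a))
    (hIoi : ∀ a : X, IsOpen (Set.Ioi a)) (hC : C.OrdConnected) :
    Delta C ε ⊆ C ∪ thickening (ε / 2) (limitEnds C) := by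
  intro y hy
  rcases hC.mem_or_mem_leftOf_or_mem_rightOf y with hyC | hyL | hyR
  · exact Or.inl hyC
  · obtain ⟨a, ha, hya⟩ := exists_dist_lt_of_mem_Delta_of_mem_leftOf hconv hIoi hy hyL
    exact Or.inr (mem_thickening_iff.2 ⟨a, Or.inl ha, hya⟩)
  · obtain ⟨b, hb, hyb⟩ := exists_dist_lt_of_mem_Delta_of_mem_rightOf hconv hIio hy hyR
    exact Or.inr (mem_thickening_iff.2 ⟨b, Or.inr hb, hyb⟩)

theorem Delta_subset_thickening
    (hconv : IsConvexMetric X) (hIio : ∀ a : X, IsOpen (Set.Iio a))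
    (hIoi : ∀ a : X, IsOpen (Set.Ioi a)) (hC : C.OrdConnected) (hε : 0 < ε) :
    Delta C ε ⊆ thickening ε C :=
  (Delta_subset_union_thickening hconv hIio hIoi hC).trans <| Set.union_subset
    (self_subset_thickening hε C)
    ((thickening_subset_of_subset _ (limitEnds_subset C)).trans (thickening_mono (by linarith) C))

/-- `D` lies on one side of `C`, hence within `ε / 2` of the one end of `C` on that side. -/
theorem ediam_le_of_subset_Delta
    (hconv : IsConvexMetric X) (hIio : ∀ a : X, IsOpen (Set.Iio a))
    (hIoi : ∀ a : X, IsOpen (Set.Ioi a)) (hC : C.OrdConnected) (hD : D.OrdConnected)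
    (hCne : C.Nonempty) (hDC : Disjoint D C)
    (hsub : D ⊆ Delta C ε) : ediam D ≤ ENNReal.ofReal ε := by
  rcases D.eq_empty_or_nonempty with rfl | ⟨y₀, hy₀⟩
  · simp
  rw [show ε = 2 * (ε / 2) by ring]
  rcases hC.subset_leftOf_or_subset_rightOf hD hCne hDC with hL | hR
  · obtain ⟨a, ha, -⟩ := exists_dist_lt_of_mem_Delta_of_mem_leftOf hconv hIoi (hsub hy₀) (hL hy₀)
    refine ediam_le_of_forall_dist_lt (a := a) fun y hy => ?_
    obtain ⟨a', ha', hya'⟩ := exists_dist_lt_of_mem_Delta_of_mem_leftOf hconv hIoi (hsub hy) (hL hy)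
    rwa [subsingleton_closure_leftOf_inter hIoi ha' ha] at hya'
  · obtain ⟨b, hb, -⟩ := exists_dist_lt_of_mem_Delta_of_mem_rightOf hconv hIio (hsub hy₀) (hR hy₀)
    refine ediam_le_of_forall_dist_lt (a := b) fun y hy => ?_
    obtain ⟨b', hb', hyb'⟩ :=
      exists_dist_lt_of_mem_Delta_of_mem_rightOf hconv hIio (hsub hy) (hR hy)
    rwa [subsingleton_inter_closure_rightOf hIio hb' hb] at hyb'

theorem connectedComponent_eq_of_subset_Delta
    (hconv : IsConvexMetric X) (hIio : ∀ a : X, IsOpen (Set.Iio a))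
    (hIoi : ∀ a : X, IsOpen (Set.Ioi a)) {v w : X}
    (hsub : connectedComponent w ⊆ Delta (connectedComponent v) ε)
    (hwide : ENNReal.ofReal ε < ediam (connectedComponent w)) :
    connectedComponent w = connectedComponent v := by
  by_contra hne
  exact hwide.not_ge (ediam_le_of_subset_Delta hconv hIio hIoi
    (ordConnected_connectedComponent hIio hIoi v) (ordConnected_connectedComponent hIio hIoi w)
    ⟨v, mem_connectedComponent⟩ (connectedComponent_disjoint hne) hsub)

theorem mem_connectedComponent_of_eventually_mem_Delta
    (hconv : IsConvexMetric X) (hIio : ∀ a : X, IsOpen (Set.Iio a))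
    (hIoi : ∀ a : X, IsOpen (Set.Ioi a)) {v x : X} {r : ℕ → ℝ} (hr : Tendsto r atTop (𝓝 0))
    (hrpos : ∀ m, 0 < r m)
    (hx : ∀ᶠ m in atTop, x ∈ Delta (connectedComponent v) (r m)) :
    x ∈ connectedComponent v := by
  rw [← isClosed_connectedComponent.closure_eq, Metric.mem_closure_iff]
  intro δ hδ
  obtain ⟨m, hxm, hm⟩ := (hx.and (hr.eventually (gt_mem_nhds hδ))).exists
  obtain ⟨c, hc, hxc⟩ := mem_thickening_iff.1 <| Delta_subset_thickening hconv hIio hIoi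
    (ordConnected_connectedComponent hIio hIoi v) (hrpos m) hxm
  exact ⟨c, hc, hxc.trans hm⟩

theorem connectedComponent_eq_of_nested_Delta
    (hconv : IsConvexMetric X) (hIio : ∀ a : X, IsOpen (Set.Iio a))
    (hIoi : ∀ a : X, IsOpen (Set.Ioi a)) {w : ℕ → X} {r : ℕ → ℝ} {N : ℕ} (hrpos : ∀ m, 0 < r m)
    (hranti : ∀ m, r (m + 1) < r m)
    (hwide : ∀ m ≥ N, ENNReal.ofReal (r m) ≤ ediam (connectedComponent (w m)))
    (hnest : ∀ m ≥ N,
      connectedComponent (w m) ⊆ Delta (connectedComponent (w (m + 1))) (r (m + 1))) :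
    ∀ m ≥ N, connectedComponent (w m) = connectedComponent (w N) := by
  refine Nat.le_induction rfl fun m hm ih => Eq.trans ?_ ih
  refine (connectedComponent_eq_of_subset_Delta hconv hIio hIoi (hnest m hm) ?_).symm
  exact ((ENNReal.ofReal_lt_ofReal_iff (hrpos m)).2 (hranti m)).trans_le (hwide m hm)

theorem eventually_Delta_connectedComponent_subset
    (hconv : IsConvexMetric X) (hIio : ∀ a : X, IsOpen (Set.Iio a))
    (hIoi : ∀ a : X, IsOpen (Set.Ioi a)) {U : Set X} {x : X} (hU : IsOpen U)
    (hxU : connectedComponent x ⊆ U) {r : ℕ → ℝ} (hr : Tendsto r atTop (𝓝 0)) :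
    ∀ᶠ m in atTop, Delta (connectedComponent x) (r m) ⊆ U := by
  obtain ⟨δ, hδ, hδU⟩ := (finite_limitEnds hIio hIoi _).isCompact.exists_thickening_subset_open
    hU ((limitEnds_subset _).trans hxU)
  filter_upwards [hr.eventually (gt_mem_nhds hδ)] with m hm
  exact (Delta_subset_union_thickening hconv hIio hIoi
    (ordConnected_connectedComponent hIio hIoi x)).trans
    (Set.union_subset hxU ((thickening_mono (by linarith) _).trans hδU))

theorem exists_wide_connectedComponent_of_mem_DXeps {A : Set X} (hA : A ∈ DXeps X ε) :
    ediam A < ENNReal.ofReal ε ∨ ∃ w ∈ A,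
      ENNReal.ofReal ε ≤ ediam (connectedComponent w) ∧ A ⊆ Delta (connectedComponent w) ε := by
  rcases hA.2 with hsmall | ⟨C, ⟨⟨w, hw, rfl⟩, hwide⟩, hsub⟩
  · exact Or.inl hsmall
  rw [hA.1.1.connectedComponentIn_eq hw] at hwide hsub
  exact Or.inr ⟨w, hw, hwide, hsub⟩

end Delta

section SieveDiam

variable {X T : Type*} [MetricSpace X] {tle : T → T → Prop} {S : T → Set X}

def SiblingDiamBound (tle : T → T → Prop) (S : T → Set X) : Prop :=
  ∀ x₀ : X, (connectedComponent x₀).Nontrivial →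
    ∀ β : Set T, IsMaxChain tle β →
      connectedComponent x₀ ⊆ ⋂ t ∈ β, S t →
      ∀ n : ℕ, kappa (connectedComponent x₀) ≤ n →
        ∀ t ∈ β ∩ treeLevel tle n, ∀ p ∈ β ∩ node tle t,
          ∀ s ∈ node tle t, s ≠ p →
            ediam (S s) ≤ ENNReal.ofReal ((2 : ℝ) ^ ((1 : ℤ) - n))

theorem mem_or_ediam_le_of_mem_node (htree : IsOmegaTree tle) (hS : IsSieve tle S)
    (hpart : LevelsDisjoint tle S) (hclopen : ∀ t, IsClopen (S t))
    (hdiam : SiblingDiamBound tle S) {w : X} {m : ℕ} {t s : T} (ht : t ∈ treeLevel tle m)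
    (hwt : w ∈ S t)
    (hwide : ENNReal.ofReal ((2 : ℝ) ^ (-(m : ℤ))) ≤ ediam (connectedComponent w))
    (hs : s ∈ node tle t) :
    w ∈ S s ∨ ediam (S s) ≤ ENNReal.ofReal ((2 : ℝ) ^ ((1 : ℤ) - m)) := by
  obtain ⟨g, hg, hgnode⟩ := hS.exists_branch htree.2.2.2.2.1 w
  obtain rfl : g m = t := hpart.eq_of_mem (hg m).1 ht (hg m).2 hwt
  by_cases hsg : s = g (m + 1)
  · exact Or.inl (hsg ▸ (hg (m + 1)).2)
  have hnontriv : (connectedComponent w).Nontrivial :=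
    ediam_pos_iff.1 ((ENNReal.ofReal_pos.2 (by positivity)).trans_le hwide)
  exact Or.inr <| hdiam w hnontriv {t | w ∈ S t} (isMaxChain_setOf_mem htree hpart hg hgnode)
    (fun _ hz => Set.mem_iInter₂.2 fun t ht => (hclopen t).connectedComponent_subset ht hz)
    m (Nat.sInf_le hwide) (g m) ⟨hwt, ht⟩ (g (m + 1)) ⟨(hg (m + 1)).2, hgnode m⟩ s hs hsg

end SieveDiam

theorem stmt19_general {X : Type*} {T : Type*} [MetricSpace X] [LinearOrder X]
    (hconv : ∀ x a b y : X, x ≤ a → a ≤ b → b ≤ y → dist a b ≤ dist x y)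
    (hIio : ∀ a : X, IsOpen (Set.Iio a)) (hIoi : ∀ a : X, IsOpen (Set.Ioi a))
    (tle : T → T → Prop) (htree : IsOmegaTree tle)
    (S : T → Set X) (hS : IsDiscreteSieve tle S)
    (hpart : ∀ n : ℕ, ∀ t ∈ treeLevel tle n, ∀ t' ∈ treeLevel tle n,
      t ≠ t' → S t ∩ S t' = ∅)
    (hDD : ∀ t, S t ∈ DD X)
    (hDXe : ∀ n : ℕ, ∀ t ∈ treeLevel tle n, S t ∈ DXeps X ((2 : ℝ) ^ (-(n : ℤ))))
    (hdiam : ∀ x₀ : X, (connectedComponent x₀).Nontrivial →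
      ∀ β : Set T, IsMaxChain tle β →
        connectedComponent x₀ ⊆ ⋂ t ∈ β, S t →
        ∀ n : ℕ, kappa (connectedComponent x₀) ≤ n →
          ∀ t ∈ β ∩ treeLevel tle n, ∀ p ∈ β ∩ node tle t,
            ∀ s ∈ node tle t, s ≠ p →
              EMetric.diam (S s) ≤ ENNReal.ofReal ((2 : ℝ) ^ ((1 : ℤ) - n)))
    (U : Set X) (hU : IsClopen U) (x : X) (hx : x ∈ U) :
    ∃ t, x ∈ S t ∧ S t ⊆ U := by
  by_contra! H
  have hclopen (t : T) : IsClopen (S t) := (hDD t).1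
  have hε : Tendsto (fun m : ℕ => (2 : ℝ) ^ (-(m : ℤ))) atTop (𝓝 0) := by
    simpa using tendsto_two_zpow_sub_natCast 0
  have hεpos (m : ℕ) : 0 < (2 : ℝ) ^ (-(m : ℤ)) := by positivity
  obtain ⟨f, hf, hfnode⟩ := hS.1.exists_branch htree.2.2.2.2.1 x
  obtain ⟨N, hN⟩ := eventually_atTop.1 <|
    (eventually_subset_of_ediam_le hU.isOpen hx (tendsto_two_zpow_sub_natCast 1)).and <|
      eventually_Delta_connectedComponent_subset hconv hIio hIoi hU.isOpen
        (hU.connectedComponent_subset hx) hε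
  have hlarge (m : ℕ) (hm : N ≤ m) (t : T) (hxt : x ∈ S t) :
      ¬ediam (S t) ≤ ENNReal.ofReal ((2 : ℝ) ^ ((1 : ℤ) - m)) :=
    fun hle => H t hxt ((hN m hm).1 _ hxt hle)
  have hwide (m : ℕ) (hm : N ≤ m) : ∃ w ∈ S (f m),
      ENNReal.ofReal ((2 : ℝ) ^ (-(m : ℤ))) ≤ ediam (connectedComponent w) ∧
        S (f m) ⊆ Delta (connectedComponent w) ((2 : ℝ) ^ (-(m : ℤ))) :=
    (exists_wide_connectedComponent_of_mem_DXeps (hDXe m (f m) (hf m).1)).resolve_left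
      fun hsmall => hlarge m hm _ (hf m).2 <| hsmall.le.trans <|
        ENNReal.ofReal_le_ofReal (zpow_le_zpow_right₀ one_le_two (by omega))
  have : Nonempty X := ⟨x⟩
  choose! w hwS hwdiam hwΔ using hwide
  have hnext (m : ℕ) (hm : N ≤ m) : w m ∈ S (f (m + 1)) :=
    (mem_or_ediam_le_of_mem_node htree hS.1 hpart hclopen hdiam (hf m).1 (hwS m hm)
      (hwdiam m hm) (hfnode m)).resolve_right (hlarge m hm _ (hf (m + 1)).2)
  have hconst := connectedComponent_eq_of_nested_Delta hconv hIio hIoi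
    (r := fun m : ℕ => (2 : ℝ) ^ (-(m : ℤ))) hεpos
    (fun m => zpow_lt_zpow_right₀ one_lt_two (by omega)) hwdiam
    (fun m hm => ((hclopen _).connectedComponent_subset (hnext m hm)).trans
      (hwΔ (m + 1) (by omega)))
  have hxC : x ∈ connectedComponent (w N) :=
    mem_connectedComponent_of_eventually_mem_Delta hconv hIio hIoi hε hεpos
    (eventually_atTop.2 ⟨N, fun m hm => hconst m hm ▸ hwΔ m hm (hf m).2⟩)
  refine H _ (hf N).2 ((hwΔ N le_rfl).trans ?_)
  rw [connectedComponent_eq hxC]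
  exact (hN N le_rfl).2

/-- Lemma 5.3: in a metrizable suborderable space `(X, ≤)` with compatible
convex metric and infinitely many connected components, let `S : T → D[X]` be
a discrete sieve on a pruned `ω`-levelled tree whose levels are partitions of
`X`, with `S(T(n)) ⊆ D[X, 2^(-n)]`, and satisfying the diameter condition
(4.1) for non-degenerate components. Then for every clopen `U ⊆ X` and every
`x ∈ U` there is `t ∈ β[x]` (i.e. `x ∈ S t`) with `S t ⊆ U`. -/
theorem stmt19 {X : Type*} {T : Type*} [MetricSpace X] [LinearOrder X]
    (hconv : ∀ x a b y : X, x ≤ a → a ≤ b → b ≤ y → dist a b ≤ dist x y)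
    (hIio : ∀ a : X, IsOpen (Set.Iio a)) (hIoi : ∀ a : X, IsOpen (Set.Ioi a))
    (hbase : ∀ (x : X) (U : Set X), IsOpen U → x ∈ U →
      ∃ V : Set X, IsOpen V ∧ x ∈ V ∧ V ⊆ U ∧ V.OrdConnected)
    (hinf : (Set.range fun x : X => connectedComponent x).Infinite)
    (tle : T → T → Prop) (htree : IsOmegaTree tle) (hpr : Pruned tle)
    (S : T → Set X) (hS : IsDiscreteSieve tle S)
    (hpart : ∀ n : ℕ, ∀ t ∈ treeLevel tle n, ∀ t' ∈ treeLevel tle n,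
      t ≠ t' → S t ∩ S t' = ∅)
    (hDD : ∀ t, S t ∈ DD X)
    (hDXe : ∀ n : ℕ, ∀ t ∈ treeLevel tle n, S t ∈ DXeps X ((2 : ℝ) ^ (-(n : ℤ))))
    (hdiam : ∀ x₀ : X, (connectedComponent x₀).Nontrivial →
      ∀ β : Set T, IsMaxChain tle β →
        connectedComponent x₀ ⊆ ⋂ t ∈ β, S t →
        ∀ n : ℕ, kappa (connectedComponent x₀) ≤ n →
          ∀ t ∈ β ∩ treeLevel tle n, ∀ p ∈ β ∩ node tle t,
            ∀ s ∈ node tle t, s ≠ p →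
              EMetric.diam (S s) ≤ ENNReal.ofReal ((2 : ℝ) ^ ((1 : ℤ) - n)))
    (U : Set X) (hU : IsClopen U) (x : X) (hx : x ∈ U) :
    ∃ t, x ∈ S t ∧ S t ⊆ U :=
  stmt19_general hconv hIio hIoi tle htree S hS hpart hDD hDXe hdiam U hU x hx
end
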